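/- (Degenerate 2-soliton obtained from the Bianchi Permutability Theorem by the limit σ₂ → σ₁ and L'Hospital's rule.) Let A, B, c, c₁ ∈ ℝ with B² − A² = 1. Then the function ω(u,v) := 2·arctan( (B·u + A·v + c) · (1/cosh(A·u + B·v + c₁)) ) is smooth on ℝ² and satisfies the hyperbolic sine-Gordon equation ∂²ω/∂v² − ∂²ω/∂u² = cos ω · sin ω at every point of ℝ². (Equivalently, tan(ω/2) = (((σ+σ⁻¹)/2)u + ((σ−σ⁻¹)/2)v + c)·sin ω₁ where ω₁ is the 1-soliton with the same parameter σ, A = (σ−σ⁻¹)/2, B = (σ+σ⁻¹)/2.) -/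

import Mathlib

/-- Partial derivative with respect to the first variable `u`. -/
noncomputable def pdu (f : ℝ × ℝ → ℝ) (p : ℝ × ℝ) : ℝ :=
  deriv (fun u => f (u, p.2)) p.1

/-- Partial derivative with respect to the second variable `v`. -/
noncomputable def pdv (f : ℝ × ℝ → ℝ) (p : ℝ × ℝ) : ℝ :=
  deriv (fun v => f (p.1, v)) p.2

private lemma cos_sin_two_arctan (x : ℝ) :
    Real.cos (2 * Real.arctan x) * Real.sin (2 * Real.arctan x)
      = 2 * x * (1 - x ^ 2) / (1 + x ^ 2) ^ 2 := by
  rw [Real.cos_two_mul, Real.sin_two_mul, Real.sin_arctan, Real.cos_arctan]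
  have h : (0:ℝ) < 1 + x ^ 2 := by positivity
  have hs : Real.sqrt (1 + x ^ 2) ^ 2 = 1 + x ^ 2 := Real.sq_sqrt h.le
  have hsne : Real.sqrt (1 + x ^ 2) ≠ 0 := by positivity
  field_simp
  linear_combination (-x * (1 + x ^ 2) ^ 2 - x * (1 - x ^ 2) * (Real.sqrt (1 + x ^ 2) ^ 2 + (1 + x ^ 2))) * hs

private lemma degen_hasDerivU (A B c c₁ : ℝ) (v u : ℝ) :
    HasDerivAt (fun x : ℝ => 2 * Real.arctan ((B * x + A * v + c) *
        (1 / Real.cosh (A * x + B * v + c₁))))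
      (2 * (B * Real.cosh (A * u + B * v + c₁)
          - A * (B * u + A * v + c) * Real.sinh (A * u + B * v + c₁))
        / (Real.cosh (A * u + B * v + c₁) ^ 2 + (B * u + A * v + c) ^ 2)) u := by
  have hL : HasDerivAt (fun x : ℝ => B * x + A * v + c) B u := by
    simpa using (((hasDerivAt_id u).const_mul B).add_const (A * v)).add_const c
  have ht : HasDerivAt (fun x : ℝ => A * x + B * v + c₁) A u := by
    simpa using (((hasDerivAt_id u).const_mul A).add_const (B * v)).add_const c₁
  have hch := ht.cosh
  have hne : Real.cosh (A * u + B * v + c₁) ≠ 0 := (Real.cosh_pos _).ne'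
  have hdiv := hL.div hch hne
  have h2 := (hdiv.arctan).const_mul 2
  have hfun : (fun x : ℝ => 2 * Real.arctan ((B * x + A * v + c) *
      (1 / Real.cosh (A * x + B * v + c₁)))) = fun x : ℝ =>
      2 * Real.arctan ((B * x + A * v + c) / Real.cosh (A * x + B * v + c₁)) := by
    funext x; rw [mul_one_div]
  rw [hfun]
  refine h2.congr_deriv ?_
  simp only [Pi.div_apply]
  have hpos : (0:ℝ) < Real.cosh (A * u + B * v + c₁) := Real.cosh_pos _
  field_simp

private lemma degen_hasDerivV (A B c c₁ : ℝ) (u v : ℝ) :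
    HasDerivAt (fun y : ℝ => 2 * Real.arctan ((B * u + A * y + c) *
        (1 / Real.cosh (A * u + B * y + c₁))))
      (2 * (A * Real.cosh (A * u + B * v + c₁)
          - B * (B * u + A * v + c) * Real.sinh (A * u + B * v + c₁))
        / (Real.cosh (A * u + B * v + c₁) ^ 2 + (B * u + A * v + c) ^ 2)) v := by
  have hL : HasDerivAt (fun y : ℝ => B * u + A * y + c) A v := by
    have h := (((hasDerivAt_id v).const_mul A).add_const c).const_add (B * u)
    simpa [add_assoc] using h
  have ht : HasDerivAt (fun y : ℝ => A * u + B * y + c₁) B v := by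
    have h := (((hasDerivAt_id v).const_mul B).add_const c₁).const_add (A * u)
    simpa [add_assoc] using h
  have hch := ht.cosh
  have hne : Real.cosh (A * u + B * v + c₁) ≠ 0 := (Real.cosh_pos _).ne'
  have hdiv := hL.div hch hne
  have h2 := (hdiv.arctan).const_mul 2
  have hfun : (fun y : ℝ => 2 * Real.arctan ((B * u + A * y + c) *
      (1 / Real.cosh (A * u + B * y + c₁)))) = fun y : ℝ =>
      2 * Real.arctan ((B * u + A * y + c) / Real.cosh (A * u + B * y + c₁)) := by
    funext y; rw [mul_one_div]
  rw [hfun]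
  refine h2.congr_deriv ?_
  simp only [Pi.div_apply]
  have hpos : (0:ℝ) < Real.cosh (A * u + B * v + c₁) := Real.cosh_pos _
  field_simp

private lemma degen_hasDerivUU (A B c c₁ : ℝ) (v u : ℝ) :
    HasDerivAt (fun x : ℝ =>
      2 * (B * Real.cosh (A * x + B * v + c₁)
          - A * (B * x + A * v + c) * Real.sinh (A * x + B * v + c₁))
        / (Real.cosh (A * x + B * v + c₁) ^ 2 + (B * x + A * v + c) ^ 2))
      ((2 * (B * (Real.sinh (A * u + B * v + c₁) * A)
            - (A * B * Real.sinh (A * u + B * v + c₁)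
               + A * (B * u + A * v + c) * (Real.cosh (A * u + B * v + c₁) * A)))
          * (Real.cosh (A * u + B * v + c₁) ^ 2 + (B * u + A * v + c) ^ 2)
        - 2 * (B * Real.cosh (A * u + B * v + c₁)
            - A * (B * u + A * v + c) * Real.sinh (A * u + B * v + c₁))
          * (2 * Real.cosh (A * u + B * v + c₁) ^ 1 * (Real.sinh (A * u + B * v + c₁) * A)
             + 2 * (B * u + A * v + c) ^ 1 * B))
        / (Real.cosh (A * u + B * v + c₁) ^ 2 + (B * u + A * v + c) ^ 2) ^ 2) u := by
  have hL : HasDerivAt (fun x : ℝ => B * x + A * v + c) B u := by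
    simpa using (((hasDerivAt_id u).const_mul B).add_const (A * v)).add_const c
  have ht : HasDerivAt (fun x : ℝ => A * x + B * v + c₁) A u := by
    simpa using (((hasDerivAt_id u).const_mul A).add_const (B * v)).add_const c₁
  have hch := ht.cosh
  have hsh := ht.sinh
  have hAL := hL.const_mul A
  have hN := (((hch.const_mul B).sub (hAL.mul hsh)).const_mul 2)
  have hD := (hch.pow 2).add (hL.pow 2)
  have hDne : Real.cosh (A * u + B * v + c₁) ^ 2 + (B * u + A * v + c) ^ 2 ≠ 0 := by
    positivity
  have := hN.div hD hDne
  refine this.congr_deriv ?_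
  simp only [Pi.add_apply, Pi.sub_apply, Pi.mul_apply, Pi.pow_apply]
  norm_num

private lemma degen_hasDerivVV (A B c c₁ : ℝ) (u v : ℝ) :
    HasDerivAt (fun y : ℝ =>
      2 * (A * Real.cosh (A * u + B * y + c₁)
          - B * (B * u + A * y + c) * Real.sinh (A * u + B * y + c₁))
        / (Real.cosh (A * u + B * y + c₁) ^ 2 + (B * u + A * y + c) ^ 2))
      ((2 * (A * (Real.sinh (A * u + B * v + c₁) * B)
            - (B * A * Real.sinh (A * u + B * v + c₁)
               + B * (B * u + A * v + c) * (Real.cosh (A * u + B * v + c₁) * B)))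
          * (Real.cosh (A * u + B * v + c₁) ^ 2 + (B * u + A * v + c) ^ 2)
        - 2 * (A * Real.cosh (A * u + B * v + c₁)
            - B * (B * u + A * v + c) * Real.sinh (A * u + B * v + c₁))
          * (2 * Real.cosh (A * u + B * v + c₁) ^ 1 * (Real.sinh (A * u + B * v + c₁) * B)
             + 2 * (B * u + A * v + c) ^ 1 * A))
        / (Real.cosh (A * u + B * v + c₁) ^ 2 + (B * u + A * v + c) ^ 2) ^ 2) v := by
  have hL : HasDerivAt (fun y : ℝ => B * u + A * y + c) A v := by
    have h := (((hasDerivAt_id v).const_mul A).add_const c).const_add (B * u)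
    simpa [add_assoc] using h
  have ht : HasDerivAt (fun y : ℝ => A * u + B * y + c₁) B v := by
    have h := (((hasDerivAt_id v).const_mul B).add_const c₁).const_add (A * u)
    simpa [add_assoc] using h
  have hch := ht.cosh
  have hsh := ht.sinh
  have hBL := hL.const_mul B
  have hN := (((hch.const_mul A).sub (hBL.mul hsh)).const_mul 2)
  have hD := (hch.pow 2).add (hL.pow 2)
  have hDne : Real.cosh (A * u + B * v + c₁) ^ 2 + (B * u + A * v + c) ^ 2 ≠ 0 := by
    positivity
  have := hN.div hD hDne
  refine this.congr_deriv ?_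
  simp only [Pi.add_apply, Pi.sub_apply, Pi.mul_apply, Pi.pow_apply]
  norm_num

theorem degenerate_twoSoliton_hyperbolic_sineGordon
    (A B c c₁ : ℝ) (hAB : B ^ 2 - A ^ 2 = 1)
    (ω : ℝ × ℝ → ℝ)
    (hω : ω = fun p : ℝ × ℝ =>
      2 * Real.arctan ((B * p.1 + A * p.2 + c) *
        (1 / Real.cosh (A * p.1 + B * p.2 + c₁)))) :
    ContDiff ℝ (⊤ : ℕ∞) ω ∧
      ∀ p : ℝ × ℝ,
        pdv (pdv ω) p - pdu (pdu ω) p = Real.cos (ω p) * Real.sin (ω p) := by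
  constructor
  · rw [hω]
    have hg : ContDiff ℝ (⊤ : ℕ∞) (fun p : ℝ × ℝ =>
        (B * p.1 + A * p.2 + c) * (1 / Real.cosh (A * p.1 + B * p.2 + c₁))) := by
      apply ContDiff.mul
      · fun_prop
      · apply ContDiff.div contDiff_const
        · exact Real.contDiff_cosh.comp (by fun_prop)
        · exact fun p => (Real.cosh_pos _).ne'
    exact contDiff_const.mul (Real.contDiff_arctan.comp hg)
  · intro p
    obtain ⟨x, y⟩ := p
    have h1u : ∀ q : ℝ × ℝ, pdu ω q =
        2 * (B * Real.cosh (A * q.1 + B * q.2 + c₁)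
            - A * (B * q.1 + A * q.2 + c) * Real.sinh (A * q.1 + B * q.2 + c₁))
          / (Real.cosh (A * q.1 + B * q.2 + c₁) ^ 2 + (B * q.1 + A * q.2 + c) ^ 2) := by
      intro q
      rw [pdu, hω]
      exact (degen_hasDerivU A B c c₁ q.2 q.1).deriv
    have h1v : ∀ q : ℝ × ℝ, pdv ω q =
        2 * (A * Real.cosh (A * q.1 + B * q.2 + c₁)
            - B * (B * q.1 + A * q.2 + c) * Real.sinh (A * q.1 + B * q.2 + c₁))
          / (Real.cosh (A * q.1 + B * q.2 + c₁) ^ 2 + (B * q.1 + A * q.2 + c) ^ 2) := by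
      intro q
      rw [pdv, hω]
      exact (degen_hasDerivV A B c c₁ q.1 q.2).deriv
    have h2u : pdu (pdu ω) (x, y) =
        ((2 * (B * (Real.sinh (A * x + B * y + c₁) * A)
            - (A * B * Real.sinh (A * x + B * y + c₁)
               + A * (B * x + A * y + c) * (Real.cosh (A * x + B * y + c₁) * A)))
          * (Real.cosh (A * x + B * y + c₁) ^ 2 + (B * x + A * y + c) ^ 2)
        - 2 * (B * Real.cosh (A * x + B * y + c₁)
            - A * (B * x + A * y + c) * Real.sinh (A * x + B * y + c₁))
          * (2 * Real.cosh (A * x + B * y + c₁) ^ 1 * (Real.sinh (A * x + B * y + c₁) * A)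
             + 2 * (B * x + A * y + c) ^ 1 * B))
        / (Real.cosh (A * x + B * y + c₁) ^ 2 + (B * x + A * y + c) ^ 2) ^ 2) := by
      rw [pdu]
      have hfe : (fun u => pdu ω (u, (x, y).2)) = fun u : ℝ =>
          2 * (B * Real.cosh (A * u + B * y + c₁)
              - A * (B * u + A * y + c) * Real.sinh (A * u + B * y + c₁))
            / (Real.cosh (A * u + B * y + c₁) ^ 2 + (B * u + A * y + c) ^ 2) := by
        funext u; exact h1u (u, y)
      rw [hfe]
      exact (degen_hasDerivUU A B c c₁ y x).deriv
    have h2v : pdv (pdv ω) (x, y) =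
        ((2 * (A * (Real.sinh (A * x + B * y + c₁) * B)
            - (B * A * Real.sinh (A * x + B * y + c₁)
               + B * (B * x + A * y + c) * (Real.cosh (A * x + B * y + c₁) * B)))
          * (Real.cosh (A * x + B * y + c₁) ^ 2 + (B * x + A * y + c) ^ 2)
        - 2 * (A * Real.cosh (A * x + B * y + c₁)
            - B * (B * x + A * y + c) * Real.sinh (A * x + B * y + c₁))
          * (2 * Real.cosh (A * x + B * y + c₁) ^ 1 * (Real.sinh (A * x + B * y + c₁) * B)
             + 2 * (B * x + A * y + c) ^ 1 * A))
        / (Real.cosh (A * x + B * y + c₁) ^ 2 + (B * x + A * y + c) ^ 2) ^ 2) := by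
      rw [pdv]
      have hfe : (fun v => pdv ω ((x, y).1, v)) = fun v : ℝ =>
          2 * (A * Real.cosh (A * x + B * v + c₁)
              - B * (B * x + A * v + c) * Real.sinh (A * x + B * v + c₁))
            / (Real.cosh (A * x + B * v + c₁) ^ 2 + (B * x + A * v + c) ^ 2) := by
        funext v; exact h1v (x, v)
      rw [hfe]
      exact (degen_hasDerivVV A B c c₁ x y).deriv
    rw [h2u, h2v, hω]
    simp only
    rw [cos_sin_two_arctan]
    set ch := Real.cosh (A * x + B * y + c₁) with hch
    set sh := Real.sinh (A * x + B * y + c₁) with hsh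
    set L := B * x + A * y + c with hL
    have hchpos : (0:ℝ) < ch := Real.cosh_pos _
    have hsq : sh ^ 2 = ch ^ 2 - 1 := Real.sinh_sq _
    have hrhs : 2 * (L * (1 / ch)) * (1 - (L * (1 / ch)) ^ 2)
        / (1 + (L * (1 / ch)) ^ 2) ^ 2
        = 2 * L * ch * (ch ^ 2 - L ^ 2) / (ch ^ 2 + L ^ 2) ^ 2 := by
      have h1 : 1 + (L * (1 / ch)) ^ 2 = (ch ^ 2 + L ^ 2) / ch ^ 2 := by
        field_simp
      rw [h1]
      have hD : ch ^ 2 + L ^ 2 ≠ 0 := by positivity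
      field_simp
    rw [hrhs, div_sub_div_same]
    congr 1
    linear_combination (2 * L * ch * (2 * sh ^ 2 - ch ^ 2 - L ^ 2 + 2)) * hAB
      + (4 * L * ch) * hsq
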